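/- Assume the mean-preserving condition: for every f ∈ F, Σ_{p ∈ D} C_μ(p) · π(f | p) · (p − f) = 0 in ℝ^Ω. Then the forecasting strategy that at each period n draws the forecast f_n according to the signaling policy π(· | p_n), using randomization independent of the state process, is calibrated: almost surely Σ_{f ∈ F} (|N_T[f]|/T) ‖ω̄_T[f] − f‖ → 0 as T → ∞. Moreover, for each f ∈ F the empirical frequency of forecast f converges almost surely to Q(f) = Σ_{p ∈ D} C_μ(p) π(f | p), so the induced distribution of forecasts is the prescribed mean-preserving contraction of the distribution of conditionals. -/

import Mathlib

/-!
Write `p_t` for the conditional at time `t` and `f_t = φ(p_t, U_t)` for the forecast. The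
increments `1{p_t = p}(δ_{X_t} - p_t)` are martingale differences for the coordinate filtration,
and for a fixed state sequence the increments `b_t (1{U_t ∈ S} - ρ)` are independent and
centred. Bounded increments `d_T` with `E[S_T d_T] = E[S_T³ d_T] = 0`, where `S_T` are the
partial sums, have `E[S_T⁴] = O(T²)`, so `S_T / T → 0` almost surely. Combining the two laws of
large numbers by Fubini, the frequency of `{p_t = p, X_t = a, f_t = q}` tends to
`C(p) p(a) π(q | p)` and that of `{p_t = p, f_t = q}` to `C(p) π(q | p)`. Summing over `p`, the
frequency-weighted deviation from `q` of the empirical state distribution on the periods with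
forecast `q` tends to `Σ_p C(p) π(q | p) (p - q)`, which vanishes by the mean-preserving
condition.
-/

open Filter MeasureTheory ProbabilityTheory

noncomputable section

variable {Ω : Type*} [Fintype Ω] [DecidableEq Ω]

/-- The Dirac point mass `δ_ω` as an element of the probability simplex in `ℝ^Ω`. -/
def diracVec (ω : Ω) : EuclideanSpace ℝ Ω := WithLp.toLp 2 (fun a => if a = ω then (1 : ℝ) else 0)

/-- The conditional law `p_n(x) ∈ ΔΩ` of the `n`-th coordinate given the first `n`
coordinates of `x`, for a measure `μ` on `Ω^ℕ` (junk value `0/0` on null cylinders). -/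
def condLaw [MeasurableSpace Ω] (μ : Measure (ℕ → Ω)) (n : ℕ) (x : ℕ → Ω) :
    EuclideanSpace ℝ Ω :=
  WithLp.toLp 2 (fun a => (μ {y | (∀ i < n, y i = x i) ∧ y n = a}).toReal /
    (μ {y | ∀ i < n, y i = x i}).toReal)

open Finset Topology
open scoped ENNReal

def cesaroMean (u : ℕ → ℝ) (T : ℕ) : ℝ := (T : ℝ)⁻¹ * ∑ t ∈ range T, u t

lemma tendsto_cesaroMean_of_eq_add_const_mul {u v w : ℕ → ℝ} {a b c : ℝ}
    (hu : Tendsto (cesaroMean u) atTop (𝓝 a)) (hv : Tendsto (cesaroMean v) atTop (𝓝 b))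
    (hw : ∀ t, w t = u t + c * v t) : Tendsto (cesaroMean w) atTop (𝓝 (a + c * b)) := by
  refine (hu.add (hv.const_mul c)).congr fun T => ?_
  simp only [cesaroMean, hw, sum_add_distrib, ← mul_sum]
  ring

lemma cesaroMean_sum {ι : Type*} (s : Finset ι) (u : ι → ℕ → ℝ) (T : ℕ) :
    cesaroMean (fun t => ∑ i ∈ s, u i t) T = ∑ i ∈ s, cesaroMean (u i) T := by
  simp only [cesaroMean, mul_sum]
  exact sum_comm

lemma card_filter_div_eq_cesaroMean (P : ℕ → Prop) [DecidablePred P] (T : ℕ) :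
    (((range T).filter P).card : ℝ) / T = cesaroMean (fun t => if P t then 1 else 0) T := by
  rw [natCast_card_filter, cesaroMean, div_eq_inv_mul]

lemma abs_sum_range_le {α : Type*} {d : ℕ → α → ℝ} {B : ℝ} (hbd : ∀ t x, |d t x| ≤ B)
    (T : ℕ) (x : α) : |∑ t ∈ range T, d t x| ≤ B * T :=
  (abs_sum_le_sum_abs _ _).trans
    ((sum_le_sum fun t (_ : t ∈ range T) => hbd t x).trans_eq (by simp [mul_comm]))

lemma tendsto_nhds_zero_of_tendsto_pow {β : Type*} {l : Filter β} {u : β → ℝ} {n : ℕ}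
    (hn : n ≠ 0) (h : Tendsto (fun k => u k ^ n) l (𝓝 0)) : Tendsto u l (𝓝 0) := by
  have hroot := ((continuous_id.rpow_const fun _ => Or.inr (by positivity :
    (0 : ℝ) ≤ (n : ℝ)⁻¹)).tendsto 0).comp (tendsto_zero_iff_abs_tendsto_zero _ |>.mp h)
  rw [tendsto_zero_iff_abs_tendsto_zero]
  simpa [Function.comp_def, abs_pow, Real.pow_rpow_inv_natCast (abs_nonneg _) hn,
    Real.zero_rpow (inv_ne_zero (Nat.cast_ne_zero.mpr hn))] using hroot

section FourthMoment

variable {α : Type*} [MeasurableSpace α] {μ : Measure α}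

lemma MeasureTheory.MemLp.top_pow {f : α → ℝ} (hf : MemLp f ∞ μ) (n : ℕ) :
    MemLp (fun x => f x ^ n) ∞ μ := by
  induction n with
  | zero => simpa using memLp_top_const (μ := μ) (1 : ℝ)
  | succ n ih => simpa only [pow_succ, Pi.mul_def] using hf.mul ih

lemma memLp_top_of_abs_le {f : α → ℝ} {C : ℝ} (hf : Measurable f) (h : ∀ x, |f x| ≤ C) :
    MemLp f ∞ μ :=
  memLp_top_of_bound hf.aestronglyMeasurable C (ae_of_all _ h)

lemma integral_add_sq_le [IsProbabilityMeasure μ] {s e : α → ℝ} {B : ℝ} (hs : MemLp s ∞ μ)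
    (he : MemLp e ∞ μ) (hB : ∀ x, |e x| ≤ B) (horth : ∫ x, s x * e x ∂μ = 0) :
    ∫ x, (s x + e x) ^ 2 ∂μ ≤ ∫ x, s x ^ 2 ∂μ + B ^ 2 := by
  have hs2 : Integrable (fun x => s x ^ 2) μ := (hs.top_pow 2).integrable le_top
  have hse : Integrable (fun x => 2 * (s x * e x)) μ :=
    ((he.mul hs).integrable le_top).const_mul 2
  calc ∫ x, (s x + e x) ^ 2 ∂μ ≤ ∫ x, (s x ^ 2 + 2 * (s x * e x) + B ^ 2) ∂μ := by
        refine integral_mono (((hs.add he).top_pow 2).integrable le_top)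
          ((hs2.add hse).add (integrable_const _)) fun x => ?_
        nlinarith [sq_le_sq.mpr ((hB x).trans (le_abs_self B))]
    _ = ∫ x, s x ^ 2 ∂μ + B ^ 2 := by
        rw [integral_add _ (integrable_const _), integral_add hs2 hse, integral_const_mul, horth]
        · simp
        · exact hs2.add hse

lemma integral_add_pow_four_le [IsProbabilityMeasure μ] {s e : α → ℝ} {B : ℝ}
    (hs : MemLp s ∞ μ) (he : MemLp e ∞ μ) (hB : ∀ x, |e x| ≤ B)
    (horth : ∫ x, s x ^ 3 * e x ∂μ = 0) :
    ∫ x, (s x + e x) ^ 4 ∂μ ≤ ∫ x, s x ^ 4 ∂μ + 8 * B ^ 2 * ∫ x, s x ^ 2 ∂μ + 3 * B ^ 4 := by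
  have hs4 : Integrable (fun x => s x ^ 4) μ := (hs.top_pow 4).integrable le_top
  have hs3e : Integrable (fun x => 4 * (s x ^ 3 * e x)) μ :=
    ((he.mul (hs.top_pow 3)).integrable le_top).const_mul 4
  have hs2 : Integrable (fun x => 8 * B ^ 2 * s x ^ 2) μ :=
    ((hs.top_pow 2).integrable le_top).const_mul _
  calc ∫ x, (s x + e x) ^ 4 ∂μ
      ≤ ∫ x, (s x ^ 4 + 4 * (s x ^ 3 * e x) + 8 * B ^ 2 * s x ^ 2 + 3 * B ^ 4) ∂μ := by
        refine integral_mono (((hs.add he).top_pow 4).integrable le_top)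
          (((hs4.add hs3e).add hs2).add (integrable_const _)) fun x => ?_
        have he2 : e x ^ 2 ≤ B ^ 2 := sq_le_sq.mpr ((hB x).trans (le_abs_self B))
        -- `4 s e³ ≤ 2 s² e² + 2 e⁴` by AM-GM, then `e² ≤ B²`
        nlinarith [sq_nonneg (s x * e x - e x ^ 2), mul_le_mul_of_nonneg_left he2 (sq_nonneg (s x)),
          mul_le_mul he2 he2 (sq_nonneg _) (sq_nonneg B), sq_nonneg (s x * e x)]
    _ = ∫ x, s x ^ 4 ∂μ + 8 * B ^ 2 * ∫ x, s x ^ 2 ∂μ + 3 * B ^ 4 := by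
        rw [integral_add _ (integrable_const _), integral_add _ hs2, integral_add hs4 hs3e,
          integral_const_mul, integral_const_mul, horth]
        · simp
        · exact hs4.add hs3e
        · exact (hs4.add hs3e).add hs2

lemma ae_tendsto_zero_of_summable_integral_norm {E : Type*} [NormedAddCommGroup E]
    {f : ℕ → α → E} (hf : ∀ n, Integrable (f n) μ) (hsum : Summable fun n => ∫ x, ‖f n x‖ ∂μ) :
    ∀ᵐ x ∂μ, Tendsto (fun n => f n x) atTop (𝓝 0) := by
  have hfin : ∑' n, eLpNorm (f n) 1 μ ≠ ∞ := by
    simp_rw [eLpNorm_one_eq_lintegral_enorm, ← ofReal_integral_norm_eq_lintegral_enorm (hf _)]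
    rw [← ENNReal.ofReal_tsum_of_nonneg (fun n => integral_nonneg fun x => norm_nonneg _) hsum]
    exact ENNReal.ofReal_ne_top
  filter_upwards [summable_norm_of_tsum_eLpNorm_ne_top le_rfl
    (fun n => (hf n).aestronglyMeasurable) hfin] with x hx
  exact tendsto_zero_iff_norm_tendsto_zero.mpr hx.tendsto_atTop_zero

variable {d : ℕ → α → ℝ} {B : ℝ}

lemma memLp_top_sum_range (hmeas : ∀ t, Measurable (d t)) (hbd : ∀ t x, |d t x| ≤ B) (T : ℕ) :
    MemLp (fun x => ∑ t ∈ range T, d t x) ∞ μ :=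
  memLp_top_of_abs_le (Finset.measurable_sum _ fun t _ => hmeas t) (abs_sum_range_le hbd T)

variable [IsProbabilityMeasure μ]

lemma integral_sq_sum_range_le (hmeas : ∀ t, Measurable (d t)) (hbd : ∀ t x, |d t x| ≤ B)
    (horth : ∀ T, ∫ x, (∑ t ∈ range T, d t x) * d T x ∂μ = 0) (T : ℕ) :
    ∫ x, (∑ t ∈ range T, d t x) ^ 2 ∂μ ≤ B ^ 2 * T := by
  induction T with
  | zero => simp
  | succ T ih =>
    simp_rw [sum_range_succ]
    have := integral_add_sq_le (memLp_top_sum_range hmeas hbd T)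
      (memLp_top_of_abs_le (hmeas T) (hbd T)) (hbd T) (horth T)
    push_cast
    linarith

lemma integral_pow_four_sum_range_le (hmeas : ∀ t, Measurable (d t)) (hbd : ∀ t x, |d t x| ≤ B)
    (horth₁ : ∀ T, ∫ x, (∑ t ∈ range T, d t x) * d T x ∂μ = 0)
    (horth₃ : ∀ T, ∫ x, (∑ t ∈ range T, d t x) ^ 3 * d T x ∂μ = 0) (T : ℕ) :
    ∫ x, (∑ t ∈ range T, d t x) ^ 4 ∂μ ≤ 4 * B ^ 4 * T ^ 2 := by
  induction T with
  | zero => simp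
  | succ T ih =>
    simp_rw [sum_range_succ]
    have hstep := integral_add_pow_four_le (memLp_top_sum_range hmeas hbd T)
      (memLp_top_of_abs_le (hmeas T) (hbd T)) (hbd T) (horth₃ T)
    have hsq := mul_le_mul_of_nonneg_left (integral_sq_sum_range_le hmeas hbd horth₁ T)
      (by positivity : (0 : ℝ) ≤ 8 * B ^ 2)
    have hB : 0 ≤ B ^ 4 * T := by positivity
    push_cast
    nlinarith

lemma ae_tendsto_cesaroMean_zero_of_orthogonal (hmeas : ∀ t, Measurable (d t))
    (hbd : ∀ t x, |d t x| ≤ B)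
    (horth₁ : ∀ T, ∫ x, (∑ t ∈ range T, d t x) * d T x ∂μ = 0)
    (horth₃ : ∀ T, ∫ x, (∑ t ∈ range T, d t x) ^ 3 * d T x ∂μ = 0) :
    ∀ᵐ x ∂μ, Tendsto (cesaroMean fun t => d t x) atTop (𝓝 0) := by
  have hpow : ∀ T x, cesaroMean (fun t => d t x) T ^ 4
      = ((T : ℝ)⁻¹) ^ 4 * (∑ t ∈ range T, d t x) ^ 4 := fun T x => mul_pow _ _ _
  have hint : ∀ T, Integrable (fun x => cesaroMean (fun t => d t x) T ^ 4) μ := fun T => by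
    simpa only [hpow] using
      (((memLp_top_sum_range hmeas hbd T).top_pow 4).integrable le_top).const_mul _
  have hmom : ∀ T : ℕ,
      ∫ x, ‖cesaroMean (fun t => d t x) T ^ 4‖ ∂μ ≤ 4 * B ^ 4 * ((T : ℝ) ^ 2)⁻¹ := by
    intro T
    have hnorm : ∀ x, ‖cesaroMean (fun t => d t x) T ^ 4‖ = cesaroMean (fun t => d t x) T ^ 4 :=
      fun x => Real.norm_of_nonneg (by positivity)
    simp_rw [hnorm, hpow]
    rw [integral_const_mul]
    calc _ ≤ ((T : ℝ)⁻¹) ^ 4 * (4 * B ^ 4 * T ^ 2) := by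
          gcongr; exact integral_pow_four_sum_range_le hmeas hbd horth₁ horth₃ T
      _ = 4 * B ^ 4 * ((T : ℝ) ^ 2)⁻¹ := by
          rcases eq_or_ne (T : ℝ) 0 with h | h
          · simp [h]
          · field_simp
  have hsum : Summable fun T : ℕ => ∫ x, ‖cesaroMean (fun t => d t x) T ^ 4‖ ∂μ :=
    .of_nonneg_of_le (fun T => integral_nonneg fun x => norm_nonneg _) hmom
      ((Real.summable_nat_pow_inv.mpr one_lt_two).mul_left _)
  filter_upwards [ae_tendsto_zero_of_summable_integral_norm hint hsum] with x hx
  exact tendsto_nhds_zero_of_tendsto_pow four_ne_zero hx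

end FourthMoment

section Independent

variable {Θ : Type*} [MeasurableSpace Θ] {ν : Measure Θ}

lemma integral_pow_sum_range_mul_eq_zero_of_iIndepFun {Y : ℕ → Θ → ℝ} (hY : iIndepFun Y ν)
    (hmeas : ∀ t, Measurable (Y t)) (hmean : ∀ t, ∫ θ, Y t θ ∂ν = 0) (T k : ℕ) :
    ∫ θ, (∑ t ∈ range T, Y t θ) ^ k * Y T θ ∂ν = 0 := by
  have hind : IndepFun (fun θ => (∑ t ∈ range T, Y t θ) ^ k) (Y T) ν := by
    simpa [Function.comp_def, Finset.sum_apply] using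
      (hY.indepFun_finsetSum_of_notMem hmeas notMem_range_self).comp
        (measurable_id.pow_const k) measurable_id
  rw [hind.integral_fun_mul_eq_mul_integral
    ((Finset.measurable_sum _ fun t _ => hmeas t).pow_const k).aestronglyMeasurable
    (hmeas T).aestronglyMeasurable, hmean T, mul_zero]

variable [IsProbabilityMeasure ν]

lemma ae_tendsto_cesaroMean_zero_of_iIndepFun {Y : ℕ → Θ → ℝ} {B : ℝ} (hY : iIndepFun Y ν)
    (hmeas : ∀ t, Measurable (Y t)) (hbd : ∀ t θ, |Y t θ| ≤ B)
    (hmean : ∀ t, ∫ θ, Y t θ ∂ν = 0) :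
    ∀ᵐ θ ∂ν, Tendsto (cesaroMean fun t => Y t θ) atTop (𝓝 0) :=
  ae_tendsto_cesaroMean_zero_of_orthogonal hmeas hbd
    (fun T => by simpa using integral_pow_sum_range_mul_eq_zero_of_iIndepFun hY hmeas hmean T 1)
    (integral_pow_sum_range_mul_eq_zero_of_iIndepFun hY hmeas hmean · 3)

lemma ae_prod_tendsto_cesaroMean_mul_indicator {α E : Type*} [MeasurableSpace α]
    [MeasurableSpace E] {μ : Measure α} {b : ℕ → α → ℝ} {K β : ℝ} (hb : ∀ t, Measurable (b t))
    (hbd : ∀ t x, |b t x| ≤ K) (hβ : ∀ᵐ x ∂μ, Tendsto (cesaroMean fun t => b t x) atTop (𝓝 β))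
    {U : ℕ → Θ → E} (hU : iIndepFun U ν) (hUmeas : ∀ t, Measurable (U t)) {S : Set E}
    (hS : MeasurableSet S) {ρ : ℝ} (hρ : ∀ t, ν.real (U t ⁻¹' S) = ρ) :
    ∀ᵐ z ∂μ.prod ν,
      Tendsto (cesaroMean fun t => b t z.1 * S.indicator 1 (U t z.2)) atTop (𝓝 (β * ρ)) := by
  have hind : ∀ t, Measurable fun θ => S.indicator (1 : E → ℝ) (U t θ) :=
    fun t => (measurable_const.indicator hS).comp (hUmeas t)
  have hmeasT : ∀ T, Measurable fun z : α × Θ =>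
      cesaroMean (fun t => b t z.1 * S.indicator 1 (U t z.2)) T := fun T =>
    (Finset.measurable_sum _ fun t _ => ((hb t).comp measurable_fst).mul
      ((hind t).comp measurable_snd)).const_mul _
  rw [Measure.ae_prod_iff_ae_ae (measurableSet_tendsto _ hmeasT)]
  filter_upwards [hβ] with x hx
  have hK : 0 ≤ K := (abs_nonneg _).trans (hbd 0 x)
  have hind_le : ∀ t θ, |S.indicator (1 : E → ℝ) (U t θ) - ρ| ≤ 1 + |ρ| := fun t θ =>
    (abs_sub _ _).trans (by gcongr; by_cases h : U t θ ∈ S <;> simp [h])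
  have hmean : ∀ t, ∫ θ, b t x * (S.indicator 1 (U t θ) - ρ) ∂ν = 0 := fun t => by
    change ∫ θ, b t x * ((U t ⁻¹' S).indicator 1 θ - ρ) ∂ν = 0
    rw [integral_const_mul, integral_sub _ (integrable_const ρ),
      integral_indicator_one ((hUmeas t) hS), hρ t]
    · simp
    · exact (integrable_const 1).indicator ((hUmeas t) hS)
  filter_upwards [ae_tendsto_cesaroMean_zero_of_iIndepFun (B := K * (1 + |ρ|))
    (Y := fun t θ => b t x * (S.indicator 1 (U t θ) - ρ))
    (hU.comp (fun t r => b t x * (S.indicator 1 r - ρ))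
      fun t => ((measurable_const.indicator hS).sub measurable_const).const_mul _)
    (fun t => ((hind t).sub measurable_const).const_mul _)
    (fun t θ => by rw [abs_mul]; exact mul_le_mul (hbd t x) (hind_le t θ) (abs_nonneg _) hK)
    hmean] with θ hθ
  simpa [mul_comm] using tendsto_cesaroMean_of_eq_add_const_mul hθ hx (c := ρ) fun t => by ring

end Independent

lemma DependsOn.measurable {ι α β : Type*} [MeasurableSpace α] [Countable α]
    [MeasurableSingletonClass α] [MeasurableSpace β] {s : Set ι} [Finite s]
    {f : (ι → α) → β} (hf : DependsOn f s) : Measurable f := by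
  intro t _
  -- `f ⁻¹' t` is saturated for the restriction to `s`, whose image is countable
  have hsat : f ⁻¹' t = s.domRestrict ⁻¹' (s.domRestrict '' (f ⁻¹' t)) := by
    refine (Set.subset_preimage_image _ _).antisymm ?_
    rintro y ⟨x, hx, hxy⟩
    rwa [Set.mem_preimage, ← hf fun i hi => congrFun hxy ⟨i, hi⟩]
  rw [hsat]
  exact measurable_pi_lambda _ (fun i => measurable_pi_apply _) (Set.to_countable _).measurableSet

section PrefixCylinders

variable {α : Type*}

def prefixCylinder (n : ℕ) (x : ℕ → α) : Set (ℕ → α) := {y | ∀ i < n, y i = x i}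

lemma domRestrict_Iio_eq_iff {n : ℕ} {x y : ℕ → α} :
    (Set.Iio n).domRestrict y = (Set.Iio n).domRestrict x ↔ y ∈ prefixCylinder n x :=
  ⟨fun h i hi => congrFun h ⟨i, hi⟩, fun h => funext fun i => h i i.2⟩

lemma diracVec_apply [DecidableEq α] (ω a : α) : diracVec ω a = if a = ω then 1 else 0 := rfl

lemma abs_ite_diracVec_apply_sub_le [DecidableEq α] (P : Prop) [Decidable P] (ω a : α) (c : ℝ) :
    |if P then diracVec ω a - c else 0| ≤ 1 + |c| := by
  have hδ : |diracVec ω a| ≤ 1 := by rw [diracVec_apply]; split_ifs <;> simp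
  split_ifs
  · exact (abs_sub _ _).trans (by linarith)
  · rw [abs_zero]; positivity

lemma diracVec_apply_eq_indicator [DecidableEq α] (n : ℕ) (a : α) :
    (fun y : ℕ → α => diracVec (y n) a) = {y | y n = a}.indicator 1 := by
  ext y; simp [diracVec_apply, Set.indicator_apply, eq_comm]

variable [MeasurableSpace α]

lemma measurableSet_prefixCylinder [Countable α] [MeasurableSingletonClass α] (n : ℕ)
    (x : ℕ → α) : MeasurableSet (prefixCylinder n x) :=
  measurableSet_setOfPred.mpr <| DependsOn.measurable (s := Set.Iio n) fun y z h =>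
    propext (forall₂_congr fun i hi => by rw [h i hi])

lemma condLaw_apply (μ : Measure (ℕ → α)) (n : ℕ) (x : ℕ → α) (a : α) :
    condLaw μ n x a
      = μ.real (prefixCylinder n x ∩ {y | y n = a}) / μ.real (prefixCylinder n x) := rfl

lemma condLaw_congr (μ : Measure (ℕ → α)) {n : ℕ} {x y : ℕ → α} (h : ∀ i < n, x i = y i) :
    condLaw μ n x = condLaw μ n y := by
  have : prefixCylinder n x = prefixCylinder n y := by
    ext z; exact forall₂_congr fun i hi => by rw [h i hi]
  ext a
  rw [condLaw_apply, condLaw_apply, this]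

lemma measureReal_prefixCylinder_inter (μ : Measure (ℕ → α)) [IsFiniteMeasure μ] (n : ℕ)
    (x : ℕ → α) (a : α) :
    μ.real (prefixCylinder n x ∩ {y | y n = a})
      = condLaw μ n x a * μ.real (prefixCylinder n x) := by
  rw [condLaw_apply]
  rcases eq_or_ne (μ.real (prefixCylinder n x)) 0 with h | h
  · rw [h, mul_zero]
    exact measureReal_mono_null Set.inter_subset_left h
  · rw [div_mul_cancel₀ _ h]

lemma measurableSet_apply_eq [MeasurableSingletonClass α] (n : ℕ) (a : α) :
    MeasurableSet {y : ℕ → α | y n = a} :=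
  measurable_pi_apply (X := fun _ => α) n (measurableSet_singleton a)

lemma integrable_diracVec_apply [DecidableEq α] [MeasurableSingletonClass α]
    (μ : Measure (ℕ → α)) [IsFiniteMeasure μ] (n : ℕ) (a : α) :
    Integrable (fun y : ℕ → α => diracVec (y n) a) μ := by
  rw [diracVec_apply_eq_indicator]
  exact (integrable_const 1).indicator (measurableSet_apply_eq n a)

lemma setIntegral_prefixCylinder_diracVec_sub_condLaw [Countable α] [MeasurableSingletonClass α]
    [DecidableEq α] (μ : Measure (ℕ → α)) [IsFiniteMeasure μ] (n : ℕ) (x : ℕ → α) (a : α) :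
    ∫ y in prefixCylinder n x, (diracVec (y n) a - condLaw μ n x a) ∂μ = 0 := by
  rw [integral_sub (integrable_diracVec_apply μ n a).integrableOn (integrable_const _),
    diracVec_apply_eq_indicator, integral_indicator_one (measurableSet_apply_eq n a),
    setIntegral_const, measureReal_restrict_apply (measurableSet_apply_eq n a), Set.inter_comm,
    measureReal_prefixCylinder_inter, smul_eq_mul, mul_comm, sub_self]


lemma integral_mul_diracVec_sub_condLaw [Fintype α] [DecidableEq α] [MeasurableSingletonClass α]
    (μ : Measure (ℕ → α)) [IsFiniteMeasure μ] {n : ℕ} {g : (ℕ → α) → ℝ}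
    (hg : DependsOn g (Set.Iio n)) (a : α) :
    ∫ y, g y * (diracVec (y n) a - condLaw μ n y a) ∂μ = 0 := by
  -- on each cylinder of length `n`, both `g` and `condLaw μ n` are constant
  set F := fun y => g y * (diracVec (y n) a - condLaw μ n y a)
  set r : (ℕ → α) → (Set.Iio n → α) := (Set.Iio n).domRestrict
  have hfiber : ∀ w, IntegrableOn F (r ⁻¹' {w}) μ ∧ ∫ y in r ⁻¹' {w}, F y ∂μ = 0 := by
    intro w
    rcases (r ⁻¹' {w}).eq_empty_or_nonempty with h | ⟨x, hx⟩
    · simp [h]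
    have hcyl : r ⁻¹' {w} = prefixCylinder n x := by
      ext y; rw [Set.mem_preimage, Set.mem_singleton_iff, ← hx, domRestrict_Iio_eq_iff]
    have hF : Set.EqOn F (fun y => g x * (diracVec (y n) a - condLaw μ n x a))
        (prefixCylinder n x) := fun y hy => by
      simp only [F, hg hy, condLaw_congr μ hy]
    rw [hcyl]
    refine ⟨?_, ?_⟩
    · exact (((integrable_diracVec_apply μ n a).sub (integrable_const _)).const_mul _
        |>.integrableOn).congr_fun hF.symm (measurableSet_prefixCylinder n x)
    · rw [setIntegral_congr_fun (measurableSet_prefixCylinder n x) hF, integral_const_mul,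
        setIntegral_prefixCylinder_diracVec_sub_condLaw, mul_zero]
  have hmeas : ∀ w, MeasurableSet (r ⁻¹' {w}) :=
    fun w => measurable_pi_lambda _ (fun i => measurable_pi_apply _) (measurableSet_singleton w)
  rw [← setIntegral_univ, ← Set.preimage_univ (f := r), ← Set.iUnion_of_singleton,
    Set.preimage_iUnion, integral_iUnion_fintype hmeas (pairwise_disjoint_fiber r)
    fun w => (hfiber w).1]
  exact Finset.sum_eq_zero fun w _ => (hfiber w).2

lemma dependsOn_ite_condLaw_eq [DecidableEq (EuclideanSpace ℝ α)] (μ : Measure (ℕ → α))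
    (t : ℕ) (p : EuclideanSpace ℝ α) (w : α → ℝ) : DependsOn (fun x : ℕ → α => if condLaw μ t x = p then w (x t) else 0)
      (Set.Iio (t + 1)) := fun x y h => by
  simp only [condLaw_congr μ fun i hi => h i (Nat.lt_succ_of_lt hi), h t (Nat.lt_succ_self t)]

lemma ae_tendsto_cesaroMean_ite_condLaw_eq_diracVec_sub [Fintype α] [DecidableEq α]
    [DecidableEq (EuclideanSpace ℝ α)] [MeasurableSingletonClass α] (μ : Measure (ℕ → α))
    [IsProbabilityMeasure μ]
    (p : EuclideanSpace ℝ α) (a : α) :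
    ∀ᵐ x ∂μ, Tendsto (cesaroMean fun t =>
      if condLaw μ t x = p then diracVec (x t) a - p a else 0) atTop (𝓝 0) := by
  set d : ℕ → (ℕ → α) → ℝ := fun t x => if condLaw μ t x = p then diracVec (x t) a - p a else 0
  have hloc : ∀ t, DependsOn (d t) (Set.Iio (t + 1)) :=
    fun t => dependsOn_ite_condLaw_eq μ t p fun ω => diracVec ω a - p a
  have horth : ∀ T k, ∫ x, (∑ t ∈ range T, d t x) ^ k * d T x ∂μ = 0 := fun T k => by
    have hg : DependsOn (fun x => (∑ t ∈ range T, d t x) ^ k *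
        (if condLaw μ T x = p then 1 else 0)) (Set.Iio T) := fun x y h => by
      have hS : ∀ t ∈ range T, d t x = d t y := fun t ht =>
        hloc t fun i hi => h i ((Set.mem_Iio.mp hi).trans_le (mem_range.mp ht))
      simp only [sum_congr rfl hS, condLaw_congr μ h]
    rw [← integral_mul_diracVec_sub_condLaw μ hg a]
    refine integral_congr_ae (ae_of_all _ fun x => ?_)
    simp only [d]
    split_ifs with h
    · rw [h, mul_one]
    · simp
  exact ae_tendsto_cesaroMean_zero_of_orthogonal (fun t => (hloc t).measurable)
    (fun t x => abs_ite_diracVec_apply_sub_le _ _ _ _)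
    (fun T => by simpa only [pow_one] using horth T 1) (horth · 3)

lemma ae_tendsto_cesaroMean_ite_condLaw_eq_diracVec_sub_const [Fintype α] [DecidableEq α]
    [DecidableEq (EuclideanSpace ℝ α)] [MeasurableSingletonClass α] (μ : Measure (ℕ → α))
    [IsProbabilityMeasure μ]
    {p : EuclideanSpace ℝ α} {γ : ℝ}
    (hγ : ∀ᵐ x ∂μ, Tendsto (cesaroMean fun t => if condLaw μ t x = p then 1 else 0) atTop (𝓝 γ))
    (a : α) (c : ℝ) :
    ∀ᵐ x ∂μ, Tendsto (cesaroMean fun t =>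
      if condLaw μ t x = p then diracVec (x t) a - c else 0) atTop (𝓝 (γ * (p a - c))) := by
  filter_upwards [ae_tendsto_cesaroMean_ite_condLaw_eq_diracVec_sub μ p a, hγ] with x h₀ h₁
  simpa [mul_comm] using tendsto_cesaroMean_of_eq_add_const_mul h₀ h₁ (c := p a - c)
    fun t => by split_ifs <;> ring

lemma ae_prod_tendsto_cesaroMean_condLaw_eq_mul_indicator [Fintype α] [DecidableEq α]
    [DecidableEq (EuclideanSpace ℝ α)] [MeasurableSingletonClass α] {μ : Measure (ℕ → α)}
    [IsProbabilityMeasure μ] {p : EuclideanSpace ℝ α} {γ : ℝ}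
    (hγ : ∀ᵐ x ∂μ, Tendsto (cesaroMean fun t => if condLaw μ t x = p then 1 else 0) atTop (𝓝 γ))
    {Θ E : Type*} [MeasurableSpace Θ] [MeasurableSpace E] {ν : Measure Θ} [IsProbabilityMeasure ν]
    {U : ℕ → Θ → E} (hU : iIndepFun U ν) (hUmeas : ∀ t, Measurable (U t)) {S : Set E}
    (hS : MeasurableSet S) {ρ : ℝ} (hρ : ∀ t, ν.real (U t ⁻¹' S) = ρ) (c : α → ℝ) :
    ∀ᵐ z ∂μ.prod ν,
      (∀ a, Tendsto (cesaroMean fun t => (if condLaw μ t z.1 = p then diracVec (z.1 t) a - c a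
        else 0) * S.indicator 1 (U t z.2)) atTop (𝓝 (γ * (p a - c a) * ρ))) ∧
      Tendsto (cesaroMean fun t => (if condLaw μ t z.1 = p then 1 else 0) *
        S.indicator 1 (U t z.2)) atTop (𝓝 (γ * ρ)) :=
  (eventually_all.2 fun a => ae_prod_tendsto_cesaroMean_mul_indicator
    (fun t => (dependsOn_ite_condLaw_eq μ t p fun ω => diracVec ω a - c a).measurable)
    (fun t x => abs_ite_diracVec_apply_sub_le _ _ _ _)
    (ae_tendsto_cesaroMean_ite_condLaw_eq_diracVec_sub_const μ hγ a (c a)) hU hUmeas hS hρ).and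
  (ae_prod_tendsto_cesaroMean_mul_indicator (K := 1)
    (fun t => (dependsOn_ite_condLaw_eq μ t p fun _ => 1).measurable)
    (fun t x => by split_ifs <;> simp) hγ hU hUmeas hS hρ)

end PrefixCylinders

lemma sum_mul_apply_sub_eq_zero {ι κ : Type*} {s : Finset ι} {c : ι → ℝ}
    {v : ι → EuclideanSpace ℝ κ} {q : EuclideanSpace ℝ κ} (h : ∑ i ∈ s, c i • (v i - q) = 0)
    (a : κ) : ∑ i ∈ s, c i * (v i a - q a) = 0 := by
  simpa only [WithLp.ofLp_sum, Finset.sum_apply, PiLp.smul_apply, PiLp.sub_apply, smul_eq_mul,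
    PiLp.zero_apply] using congrArg (fun v : EuclideanSpace ℝ κ => v a) h

lemma card_filter_div_mul_norm_sub_eq {V : Type*} [NormedAddCommGroup V] [NormedSpace ℝ V]
    (P : ℕ → Prop) [DecidablePred P] (v : ℕ → V) (q : V) (T : ℕ) :
    (((range T).filter P).card : ℝ) / T *
        ‖(((range T).filter P).card : ℝ)⁻¹ • ∑ t ∈ (range T).filter P, v t - q‖
      = ‖(T : ℝ)⁻¹ • ∑ t ∈ (range T).filter P, (v t - q)‖ := by
  rcases Nat.eq_zero_or_pos ((range T).filter P).card with hn | hn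
  · simp [card_eq_zero.mp hn]
  set n : ℝ := ((((range T).filter P).card : ℕ) : ℝ)
  have hn' : n ≠ 0 := by positivity
  have hsmul : n⁻¹ • ∑ t ∈ (range T).filter P, v t - q
      = n⁻¹ • ∑ t ∈ (range T).filter P, (v t - q) := by
    rw [sum_sub_distrib, sum_const, ← Nat.cast_smul_eq_nsmul ℝ, smul_sub, smul_smul,
      inv_mul_cancel₀ hn', one_smul]
  rw [hsmul, norm_smul, norm_smul, norm_inv, norm_inv, Real.norm_of_nonneg (by positivity : 0 ≤ n),
    Real.norm_natCast]
  field_simp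

def calibrationScore [DecidableEq (EuclideanSpace ℝ Ω)] (X : ℕ → Ω)
    (f : ℕ → EuclideanSpace ℝ Ω) (F : Finset (EuclideanSpace ℝ Ω)) (T : ℕ) : ℝ :=
  ∑ q ∈ F, (((range T).filter fun t => f t = q).card : ℝ) / T *
    ‖(((range T).filter fun t => f t = q).card : ℝ)⁻¹ •
      ∑ t ∈ (range T).filter fun t => f t = q, diracVec (X t) - q‖

lemma tendsto_calibrationScore_zero [DecidableEq (EuclideanSpace ℝ Ω)] (X : ℕ → Ω)
    (f : ℕ → EuclideanSpace ℝ Ω) (F : Finset (EuclideanSpace ℝ Ω))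
    (h : ∀ q ∈ F, ∀ a, Tendsto (cesaroMean fun t => if f t = q then diracVec (X t) a - q a else 0)
      atTop (𝓝 0)) :
    Tendsto (calibrationScore X f F) atTop (𝓝 0) := by
  have hterm : ∀ q ∈ F, Tendsto (fun T : ℕ =>
      ‖(T : ℝ)⁻¹ • ∑ t ∈ (range T).filter fun t => f t = q, (diracVec (X t) - q)‖)
      atTop (𝓝 0) := fun q hq => by
    have hcoord : Tendsto (fun T : ℕ => WithLp.ofLp ((T : ℝ)⁻¹ •
        ∑ t ∈ (range T).filter fun t => f t = q, (diracVec (X t) - q))) atTop (𝓝 0) := by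
      refine tendsto_pi_nhds.mpr fun a => (h q hq a).congr fun T => ?_
      simp only [cesaroMean, PiLp.smul_apply, WithLp.ofLp_sum, Finset.sum_apply, smul_eq_mul,
        sum_filter]
      exact congrArg _ (sum_congr rfl fun t _ => by split_ifs <;> simp)
    exact tendsto_zero_iff_norm_tendsto_zero.mp (by
      simpa only [Function.comp_def, WithLp.toLp_ofLp, WithLp.toLp_zero] using
        ((PiLp.continuous_toLp 2 _).tendsto 0).comp hcoord)
  unfold calibrationScore
  simp_rw [card_filter_div_mul_norm_sub_eq]
  simpa only [sum_const_zero] using tendsto_finsetSum F hterm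

lemma tendsto_cesaroMean_ite_comp_eq {E R G : Type*} [DecidableEq E] [DecidableEq G]
    {D : Finset E} {c : ℕ → E} (hc : ∀ t, c t ∈ D) (φ : E → R → G) (r : ℕ → R) (q : G)
    (w : ℕ → ℝ) {L : E → ℝ}
    (h : ∀ p ∈ D, Tendsto (cesaroMean fun t =>
      (if c t = p then w t else 0) * {x | φ p x = q}.indicator 1 (r t)) atTop (𝓝 (L p))) :
    Tendsto (cesaroMean fun t => if φ (c t) (r t) = q then w t else 0) atTop
      (𝓝 (∑ p ∈ D, L p)) := by
  have hsplit : ∀ t, (if φ (c t) (r t) = q then w t else 0)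
      = ∑ p ∈ D, (if c t = p then w t else 0) * {x | φ p x = q}.indicator 1 (r t) := fun t => by
    rw [sum_eq_single_of_mem (c t) (hc t) fun p _ hp => by simp [Ne.symm hp]]
    by_cases hq : φ (c t) (r t) = q <;> simp [hq]
  refine (tendsto_finsetSum D h).congr fun T => ?_
  rw [← cesaroMean_sum]
  simp only [hsplit]

open Classical in
theorem signaling_policy_is_calibrated_general
    [MeasurableSpace Ω] [MeasurableSingletonClass Ω]
    (μ : Measure (ℕ → Ω)) [IsProbabilityMeasure μ]
    (D : Finset (EuclideanSpace ℝ Ω))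
    (hD : ∀ᵐ x ∂μ, ∀ n, condLaw μ n x ∈ D)
    (C : EuclideanSpace ℝ Ω → ℝ)
    (hC : ∀ p ∈ D, ∀ᵐ x ∂μ, Tendsto
      (fun N : ℕ => (N : ℝ)⁻¹ *
        ∑ n ∈ Finset.range N, (if condLaw μ n x = p then (1 : ℝ) else 0))
      atTop (nhds (C p)))
    (F : Finset (EuclideanSpace ℝ Ω))
    (pol : EuclideanSpace ℝ Ω → EuclideanSpace ℝ Ω → ℝ)  -- pol p q = π(q | p)
    (hpol0 : ∀ p ∈ D, ∀ q ∈ F, 0 ≤ pol p q)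
    (hmp : ∀ q ∈ F, ∑ p ∈ D, (C p * pol p q) • (p - q) = (0 : EuclideanSpace ℝ Ω))
    -- the randomization device: i.i.d. uniform-[0,1] random variables on (Θ, ν)
    {Θ : Type*} [MeasurableSpace Θ] (ν : Measure Θ) [IsProbabilityMeasure ν]
    (U : ℕ → Θ → ℝ) (hUmeas : ∀ n, Measurable (U n))
    (hUindep : iIndepFun U ν)
    (hUunif : ∀ n, Measure.map (U n) ν = volume.restrict (Set.Icc (0 : ℝ) 1))
    -- the randomized forecast: f_n = φ(p_n, U_n), with law π(· | p)
    (φ : EuclideanSpace ℝ Ω → ℝ → EuclideanSpace ℝ Ω)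
    (hφmeas : ∀ p, Measurable (φ p))
    (hφlaw : ∀ p ∈ D, ∀ q ∈ F,
      volume.restrict (Set.Icc (0 : ℝ) 1) {r : ℝ | φ p r = q} = ENNReal.ofReal (pol p q)) :
    ∀ᵐ z ∂(μ.prod ν),
      (Tendsto (fun T : ℕ => ∑ q ∈ F,
          ((((Finset.range T).filter fun t => φ (condLaw μ t z.1) (U t z.2) = q).card : ℝ) / T) *
            ‖((((Finset.range T).filter fun t => φ (condLaw μ t z.1) (U t z.2) = q).card : ℝ)⁻¹ •
                ∑ t ∈ (Finset.range T).filter fun t => φ (condLaw μ t z.1) (U t z.2) = q,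
                  diracVec (z.1 t)) - q‖)
        atTop (nhds 0)) ∧
      ∀ q ∈ F, Tendsto
        (fun T : ℕ =>
          ((((Finset.range T).filter fun t => φ (condLaw μ t z.1) (U t z.2) = q).card : ℝ) / T))
        atTop (nhds (∑ p ∈ D, C p * pol p q)) := by
  have hS : ∀ p q, MeasurableSet {r : ℝ | φ p r = q} :=
    fun p q => hφmeas p (measurableSet_singleton q)
  have hρ : ∀ p ∈ D, ∀ q ∈ F, ∀ t, ν.real (U t ⁻¹' {r | φ p r = q}) = pol p q :=
    fun p hp q hq t => by
      rw [measureReal_def, ← Measure.map_apply (hUmeas t) (hS p q),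
        hUunif t, hφlaw p hp q hq, ENNReal.toReal_ofReal (hpol0 p hp q hq)]
  filter_upwards [Measure.quasiMeasurePreserving_fst.ae hD, (eventually_all_finset D).2
    fun p hp => (eventually_all_finset F).2 fun q hq =>
      ae_prod_tendsto_cesaroMean_condLaw_eq_mul_indicator (hC p hp) hUindep hUmeas (hS p q)
        (hρ p hp q hq) fun a => q a] with z hzD hz
  refine ⟨tendsto_calibrationScore_zero _ _ F fun q hq a => ?_, fun q hq => ?_⟩
  · have hzero : ∑ p ∈ D, C p * (p a - q a) * pol p q = 0 :=
      (sum_congr rfl fun p _ => by ring).trans (sum_mul_apply_sub_eq_zero (hmp q hq) a)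
    simpa only [hzero] using tendsto_cesaroMean_ite_comp_eq hzD φ (fun t => U t z.2) q _
      fun p hp => (hz p hp q hq).1 a
  · simp_rw [card_filter_div_eq_cesaroMean]
    exact tendsto_cesaroMean_ite_comp_eq hzD φ (fun t => U t z.2) q (fun _ => 1)
      fun p hp => (hz p hp q hq).2

open Classical in
/-- For a stationary ergodic process, the forecasting strategy that at each period draws a
forecast according to a signaling policy `pol` applied to that period's conditional, using
an independent i.i.d. uniform randomization device, is calibrated whenever `pol` satisfies
the mean-preserving condition; moreover the induced limit distribution of forecasts is
`Q(q) = Σ_p C(p) pol(q | p)`, the prescribed mean-preserving contraction of the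
distribution of conditionals `C`. -/
theorem signaling_policy_is_calibrated
    [MeasurableSpace Ω] [MeasurableSingletonClass Ω]
    (μ : Measure (ℕ → Ω)) [IsProbabilityMeasure μ]
    (herg : Ergodic (fun x : ℕ → Ω => fun n => x (n + 1)) μ)
    (D : Finset (EuclideanSpace ℝ Ω))
    (hD : ∀ᵐ x ∂μ, ∀ n, condLaw μ n x ∈ D)
    (C : EuclideanSpace ℝ Ω → ℝ)
    (hC : ∀ p ∈ D, ∀ᵐ x ∂μ, Tendsto
      (fun N : ℕ => (N : ℝ)⁻¹ *
        ∑ n ∈ Finset.range N, (if condLaw μ n x = p then (1 : ℝ) else 0))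
      atTop (nhds (C p)))
    (F : Finset (EuclideanSpace ℝ Ω))
    (pol : EuclideanSpace ℝ Ω → EuclideanSpace ℝ Ω → ℝ)  -- pol p q = π(q | p)
    (hpol0 : ∀ p ∈ D, ∀ q ∈ F, 0 ≤ pol p q)
    (hpol1 : ∀ p ∈ D, ∑ q ∈ F, pol p q = 1)
    (hmp : ∀ q ∈ F, ∑ p ∈ D, (C p * pol p q) • (p - q) = (0 : EuclideanSpace ℝ Ω))
    -- the randomization device: i.i.d. uniform-[0,1] random variables on (Θ, ν)
    {Θ : Type*} [MeasurableSpace Θ] (ν : Measure Θ) [IsProbabilityMeasure ν]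
    (U : ℕ → Θ → ℝ) (hUmeas : ∀ n, Measurable (U n))
    (hUindep : iIndepFun U ν)
    (hUunif : ∀ n, Measure.map (U n) ν = volume.restrict (Set.Icc (0 : ℝ) 1))
    -- the randomized forecast: f_n = φ(p_n, U_n), with law π(· | p)
    (φ : EuclideanSpace ℝ Ω → ℝ → EuclideanSpace ℝ Ω)
    (hφmeas : ∀ p, Measurable (φ p))
    (hφF : ∀ p ∈ D, ∀ r : ℝ, φ p r ∈ F)
    (hφlaw : ∀ p ∈ D, ∀ q ∈ F,
      volume.restrict (Set.Icc (0 : ℝ) 1) {r : ℝ | φ p r = q} = ENNReal.ofReal (pol p q)) :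
    ∀ᵐ z ∂(μ.prod ν),
      (Tendsto (fun T : ℕ => ∑ q ∈ F,
          ((((Finset.range T).filter fun t => φ (condLaw μ t z.1) (U t z.2) = q).card : ℝ) / T) *
            ‖((((Finset.range T).filter fun t => φ (condLaw μ t z.1) (U t z.2) = q).card : ℝ)⁻¹ •
                ∑ t ∈ (Finset.range T).filter fun t => φ (condLaw μ t z.1) (U t z.2) = q,
                  diracVec (z.1 t)) - q‖)
        atTop (nhds 0)) ∧
      ∀ q ∈ F, Tendsto
        (fun T : ℕ =>
          ((((Finset.range T).filter fun t => φ (condLaw μ t z.1) (U t z.2) = q).card : ℝ) / T))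
        atTop (nhds (∑ p ∈ D, C p * pol p q)) :=
  signaling_policy_is_calibrated_general μ D hD C hC F pol hpol0 hmp ν U hUmeas hUindep hUunif φ
    hφmeas hφlaw

end
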